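/- Define the forward $x$-shift operator for family (iv) by $(\tilde{\mathcal{F}}(x,N) f)(x) = \frac{1}{1-q^{N+1}}\big((1-q^{x+1}) f(x) + q^{N+1}(q^{x-N}-1) f(x+1)\big)$, with $0<q<1$. Then for all integers $M\ge 1$, the ordered product $\prod^{\leftarrow}_{k=0,\ldots,M-1} \tilde{\mathcal{F}}(x+k, N+k)$ equals $\frac{1}{(q^{N+1};q)_M}\sum_{j=0}^M (-1)^j \genfrac{[}{]}{0pt}{}{M}{j}_q q^{\frac{1}{2}j(j+1)+Nj}(q^{x+1+j};q)_{M-j}(q^{x-N};q)_j\, e^{j\partial}$, where $e^{j\partial} f(x) = f(x+j)$. -/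
import Mathlib


/-- q-Pochhammer symbol `(a;q)_n`. -/
noncomputable def qpoch (a q : ℝ) (n : ℕ) : ℝ := ∏ j ∈ Finset.range n, (1 - a * q ^ j)

/-- `(q;q)_n`. -/
noncomputable def qfac (q : ℝ) (n : ℕ) : ℝ := qpoch q q n

/-- Gaussian binomial coefficient. -/
noncomputable def qbinom (q : ℝ) (M j : ℕ) : ℝ := qfac q M / (qfac q j * qfac q (M - j))

/-- Iterated application of the family (iv) forward x-shift operators:
`qIter q N f 0 = f`, `qIter q N f (k+1) = 𝓕(x+k, N+k) (qIter q N f k)`, where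
`(𝓕(x+k,N+k) g)(x) = ((1-q^{x+k+1}) g(x) + q^{N+k+1}(q^{x-N}-1) g(x+1)) / (1-q^{N+k+1})`. -/
noncomputable def qIter (q : ℝ) (N : ℕ) (f : ℝ → ℝ) : ℕ → ℝ → ℝ
  | 0 => f
  | k + 1 => fun x =>
      ((1 - q ^ (x + k + 1)) * qIter q N f k x +
        q ^ ((N : ℝ) + k + 1) * (q ^ (x - N) - 1) * qIter q N f k (x + 1)) /
          (1 - q ^ ((N : ℝ) + k + 1))

lemma qpoch_succ_right (a q : ℝ) (n : ℕ) : qpoch a q (n+1) = qpoch a q n * (1 - a * q ^ n) := by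
  simp [qpoch, Finset.prod_range_succ]

lemma qpoch_succ_left (a q : ℝ) (n : ℕ) : qpoch a q (n+1) = (1 - a) * qpoch (a*q) q n := by
  rw [qpoch, Finset.prod_range_succ', qpoch, pow_zero, mul_one, mul_comm]
  congr 1
  exact Finset.prod_congr rfl (fun j _ => by ring_nf)

lemma qfac_pos {q : ℝ} (hq0 : 0 < q) (hq1 : q < 1) (n : ℕ) : 0 < qfac q n := by
  unfold qfac qpoch
  apply Finset.prod_pos
  intro j _
  have h1 : q ^ j ≤ 1 := pow_le_one₀ hq0.le hq1.le
  nlinarith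

lemma qfac_zero (q : ℝ) : qfac q 0 = 1 := by simp [qfac, qpoch]

lemma qbinom_zero {q : ℝ} (hq0 : 0 < q) (hq1 : q < 1) (M : ℕ) : qbinom q M 0 = 1 := by
  rw [qbinom, qfac_zero, one_mul, Nat.sub_zero, div_self (qfac_pos hq0 hq1 M).ne']

lemma qbinom_self {q : ℝ} (hq0 : 0 < q) (hq1 : q < 1) (M : ℕ) : qbinom q M M = 1 := by
  rw [qbinom, Nat.sub_self, qfac_zero, mul_one, div_self (qfac_pos hq0 hq1 M).ne']

lemma qfac_succ (q : ℝ) (n : ℕ) : qfac q (n+1) = qfac q n * (1 - q * q ^ n) := qpoch_succ_right q q n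

lemma qbinom_pascal {q : ℝ} (hq0 : 0 < q) (hq1 : q < 1) (M i : ℕ) (hi : i + 1 ≤ M) :
    qbinom q (M+1) (i+1) = qbinom q M (i+1) + q ^ (M - i) * qbinom q M i := by
  have h1 : M + 1 - (i + 1) = M - i := by omega
  have h2 : M - i = (M - (i+1)) + 1 := by omega
  unfold qbinom
  rw [h1, qfac_succ q M, h2, qfac_succ q (M - (i+1)), qfac_succ q i]
  have pM := (qfac_pos hq0 hq1 M).ne'
  have pi := (qfac_pos hq0 hq1 i).ne'
  have pMi := (qfac_pos hq0 hq1 (M - (i+1))).ne'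
  have f1 : (1 : ℝ) - q * q ^ i ≠ 0 := by
    have h1 : q ^ i ≤ 1 := pow_le_one₀ hq0.le hq1.le
    nlinarith
  have f2 : (1 : ℝ) - q * q ^ (M - (i+1)) ≠ 0 := by
    have h1 : q ^ (M - (i+1)) ≤ 1 := pow_le_one₀ hq0.le hq1.le
    nlinarith
  have key : (1 : ℝ) - q * q ^ M = (1 - q * q ^ (M-(i+1))) + q ^ ((M-(i+1))+1) * (1 - q * q ^ i) := by
    have : q * q ^ M = q ^ ((M-(i+1))+1) * (q * q ^ i) := by
      rw [← pow_succ', ← pow_succ', ← pow_add]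
      congr 1
      omega
    rw [this]
    ring
  field_simp
  rw [key]
  ring

/-- The coefficient in the expansion. -/
noncomputable def qcoef (q : ℝ) (N M j : ℕ) (x : ℝ) : ℝ :=
  (-1) ^ j * qbinom q M j * q ^ (j * (j + 1) / 2 + N * j) *
    qpoch (q ^ (x + 1 + j)) q (M - j) * qpoch (q ^ (x - N)) q j

lemma qcoef_bot {q : ℝ} (hq0 : 0 < q) (hq1 : q < 1) (N M : ℕ) (x : ℝ) :
    qcoef q N (M+1) 0 x = (1 - q ^ (x + (M:ℝ) + 1)) * qcoef q N M 0 x := by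
  unfold qcoef
  rw [qbinom_zero hq0 hq1, qbinom_zero hq0 hq1, Nat.sub_zero, Nat.sub_zero,
    qpoch_succ_right]
  have hA : q ^ (x + 1 + ((0:ℕ):ℝ)) * q ^ M = q ^ (x + (M:ℝ) + 1) := by
    rw [← Real.rpow_natCast q M, ← Real.rpow_add hq0]
    norm_num
    ring_nf
  rw [hA]
  ring

lemma qcoef_top {q : ℝ} (hq0 : 0 < q) (hq1 : q < 1) (N M : ℕ) (x : ℝ) :
    qcoef q N (M+1) (M+1) x
      = q ^ ((N:ℝ) + M + 1) * (q ^ (x - (N:ℝ)) - 1) * qcoef q N M M (x+1) := by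
  unfold qcoef
  rw [qbinom_self hq0 hq1, qbinom_self hq0 hq1, Nat.sub_self, Nat.sub_self]
  have hB : q ^ ((N:ℝ) + (M:ℝ) + 1) = q ^ (N + M + 1) := by
    rw [← Real.rpow_natCast q (N + M + 1)]
    push_cast
    ring_nf
  rw [hB]
  have hC : q ^ (x + 1 - (N:ℝ)) = q ^ (x - (N:ℝ)) * q := by
    rw [show x + 1 - (N:ℝ) = (x - (N:ℝ)) + 1 by ring, Real.rpow_add_one hq0.ne']
  rw [hC, qpoch_succ_left (q ^ (x - (N:ℝ))) q M]
  have hE : (M+1) * ((M+1) + 1) / 2 + N * (M+1) = (M * (M + 1) / 2 + N * M) + (N + M + 1) := by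
    have h2 : 2 ∣ M * (M + 1) := (Nat.even_mul_succ_self M).two_dvd
    have h3 : (M+1) * ((M+1) + 1) = M * (M + 1) + 2*(M+1) := by ring
    have h4 : N * (M+1) = N * M + N := by ring
    omega
  rw [hE, pow_add]
  simp [qpoch]
  ring

lemma qcoef_mid {q : ℝ} (hq0 : 0 < q) (hq1 : q < 1) (N M i : ℕ) (x : ℝ) (hi : i + 1 ≤ M) :
    qcoef q N (M+1) (i+1) x
      = (1 - q ^ (x + (M:ℝ) + 1)) * qcoef q N M (i+1) x
        + q ^ ((N:ℝ) + M + 1) * (q ^ (x - (N:ℝ)) - 1) * qcoef q N M i (x+1) := by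
  obtain ⟨m, rfl⟩ := Nat.exists_eq_add_of_le hi
  unfold qcoef
  have s1 : i + 1 + m + 1 - (i+1) = m + 1 := by omega
  have s2 : i + 1 + m - (i+1) = m := by omega
  have s3 : i + 1 + m - i = m + 1 := by omega
  rw [s1, s2, s3]
  rw [qbinom_pascal hq0 hq1 (i+1+m) i (by omega), s3]
  -- canonicalize the rpow arguments
  rw [show x + 1 + ((i+1 : ℕ):ℝ) = x + 1 + 1 + (i:ℝ) from by push_cast; ring]
  -- convert the big rpow multipliers to npow
  rw [show (N:ℝ) + ((i+1+m : ℕ):ℝ) + 1 = ((N+i+m+2 : ℕ):ℝ) from by push_cast; ring,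
    Real.rpow_natCast q (N+i+m+2)]
  -- expand the length-(m+1) pochhammers
  rw [qpoch_succ_right (q ^ (x + 1 + 1 + (i:ℝ))) q m]
  have hA : q ^ (x + 1 + 1 + (i:ℝ)) * q ^ m = q ^ (x + ((i+1+m : ℕ):ℝ) + 1) := by
    rw [← Real.rpow_natCast q m, ← Real.rpow_add hq0]
    push_cast
    ring_nf
  rw [hA]
  -- expand the (x-N) pochhammer of length i+1
  have hC : q ^ (x + 1 - (N:ℝ)) = q ^ (x - (N:ℝ)) * q := by
    rw [show x + 1 - (N:ℝ) = (x - (N:ℝ)) + 1 by ring, Real.rpow_add_one hq0.ne']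
  rw [hC, qpoch_succ_left (q ^ (x - (N:ℝ))) q i]
  -- exponent arithmetic
  have hE : (i+1) * ((i+1) + 1) / 2 + N * (i+1) = (i * (i + 1) / 2 + N * i) + (N + i + 1) := by
    have h2 : 2 ∣ i * (i + 1) := (Nat.even_mul_succ_self i).two_dvd
    have h3 : (i+1) * ((i+1) + 1) = i * (i + 1) + 2*(i+1) := by ring
    have h4 : N * (i+1) = N * i + N := by ring
    omega
  have hE2 : (N+i+m+2) = (N + i + 1) + (m + 1) := by omega
  rw [hE, hE2]
  ring

lemma sum_step {q : ℝ} (hq0 : 0 < q) (hq1 : q < 1) (N M : ℕ) (f : ℝ → ℝ) (x : ℝ) :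
    ∑ j ∈ Finset.range (M+2), qcoef q N (M+1) j x * f (x + j)
      = (1 - q ^ (x + (M:ℝ) + 1)) * ∑ j ∈ Finset.range (M+1), qcoef q N M j x * f (x + j)
        + q ^ ((N:ℝ) + M + 1) * (q ^ (x - (N:ℝ)) - 1) *
            ∑ j ∈ Finset.range (M+1), qcoef q N M j (x+1) * f (x + 1 + j) := by
  set A := 1 - q ^ (x + (M:ℝ) + 1) with hAdef
  set B := q ^ ((N:ℝ) + M + 1) * (q ^ (x - (N:ℝ)) - 1) with hBdef
  rw [Finset.sum_range_succ']
  have hsplit : ∀ j ∈ Finset.range (M+1),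
      qcoef q N (M+1) (j+1) x * f (x + ((j+1 : ℕ):ℝ))
        = (if j + 1 ≤ M then A * (qcoef q N M (j+1) x * f (x + ((j+1:ℕ):ℝ))) else 0)
          + B * (qcoef q N M j (x+1) * f (x + 1 + (j:ℝ))) := by
    intro j hj
    have hfx : x + ((j+1 : ℕ):ℝ) = x + 1 + (j:ℝ) := by push_cast; ring
    by_cases h : j + 1 ≤ M
    · rw [if_pos h, qcoef_mid hq0 hq1 N M j x h, hfx]
      ring
    · have hjM : j = M := by
        simp only [Finset.mem_range] at hj; omega
      rw [if_neg h, hfx, hjM, qcoef_top hq0 hq1 N M x]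
      ring
  rw [Finset.sum_congr rfl hsplit, Finset.sum_add_distrib]
  have h1 : ∑ j ∈ Finset.range (M+1),
      (if j + 1 ≤ M then A * (qcoef q N M (j+1) x * f (x + ((j+1:ℕ):ℝ))) else 0)
        = ∑ j ∈ Finset.range M, A * (qcoef q N M (j+1) x * f (x + ((j+1:ℕ):ℝ))) := by
    rw [Finset.sum_range_succ, if_neg (by omega), add_zero]
    apply Finset.sum_congr rfl
    intro j hj
    rw [if_pos (by simp only [Finset.mem_range] at hj; omega)]
  rw [h1]
  have h2 : A * ∑ j ∈ Finset.range (M+1), qcoef q N M j x * f (x + (j:ℝ))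
      = ∑ j ∈ Finset.range M, A * (qcoef q N M (j+1) x * f (x + ((j+1:ℕ):ℝ)))
        + A * (qcoef q N M 0 x * f (x + ((0:ℕ):ℝ))) := by
    rw [Finset.sum_range_succ' (fun j => qcoef q N M j x * f (x + (j:ℝ))) M] at *
    rw [mul_add, Finset.mul_sum]
  have h3 : qcoef q N (M+1) 0 x * f (x + ((0:ℕ):ℝ))
      = A * (qcoef q N M 0 x * f (x + ((0:ℕ):ℝ))) := by
    rw [qcoef_bot hq0 hq1 N M x]; ring
  rw [h3, h2, Finset.mul_sum]
  ring

lemma qpoch_pos {a q : ℝ} (hq0 : 0 < q) (hq1 : q < 1) (ha0 : 0 < a) (ha1 : a < 1) (n : ℕ) :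
    0 < qpoch a q n := by
  unfold qpoch
  apply Finset.prod_pos
  intro j _
  have h1 : q ^ j ≤ 1 := pow_le_one₀ hq0.le hq1.le
  nlinarith


lemma main_aux {q : ℝ} (hq0 : 0 < q) (hq1 : q < 1) (N : ℕ) (f : ℝ → ℝ) :
    ∀ (M : ℕ) (x : ℝ), qIter q N f M x
      = (1 / qpoch (q ^ ((N : ℝ) + 1)) q M) *
          ∑ j ∈ Finset.range (M + 1), qcoef q N M j x * f (x + j) := by
  intro M
  induction M with
  | zero =>
    intro x
    simp [qIter, qcoef, qpoch, qbinom, qfac]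
  | succ M ih =>
    intro x
    have ha0 : (0:ℝ) < q ^ ((N:ℝ)+1) := Real.rpow_pos_of_pos hq0 _
    have ha1 : q ^ ((N:ℝ)+1) < 1 := Real.rpow_lt_one hq0.le hq1 (by positivity)
    have hP : 0 < qpoch (q ^ ((N:ℝ)+1)) q M := qpoch_pos hq0 hq1 ha0 ha1 M
    have hD1 : q ^ ((N:ℝ)+(M:ℝ)+1) < 1 := Real.rpow_lt_one hq0.le hq1 (by positivity)
    have hD : (1:ℝ) - q ^ ((N:ℝ)+(M:ℝ)+1) ≠ 0 := sub_ne_zero.mpr hD1.ne'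
    have hPoch : qpoch (q ^ ((N:ℝ)+1)) q (M+1)
        = qpoch (q ^ ((N:ℝ)+1)) q M * (1 - q ^ ((N:ℝ)+(M:ℝ)+1)) := by
      rw [qpoch_succ_right]
      have h5 : q ^ ((N:ℝ)+1) * q ^ (M:ℕ) = q ^ ((N:ℝ)+(M:ℝ)+1) := by
        rw [← Real.rpow_natCast q M, ← Real.rpow_add hq0]
        ring_nf
      rw [h5]
    simp only [qIter]
    rw [ih x, ih (x+1), hPoch, sum_step hq0 hq1 N M f x]
    field_simp

/-- the ordered product of the family (iv) forward x-shift operators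
equals
`(1/(q^{N+1};q)_M) ∑_{j=0}^M (-1)^j [M j]_q q^{j(j+1)/2+Nj} (q^{x+1+j};q)_{M-j} (q^{x-N};q)_j e^{j∂}`. -/
theorem qKrawtchouk_forward_shift_product (q : ℝ) (hq0 : 0 < q) (hq1 : q < 1)
    (M : ℕ) (hM : 1 ≤ M) (N : ℕ) (f : ℝ → ℝ) (x : ℝ) :
    qIter q N f M x =
      (1 / qpoch (q ^ ((N : ℝ) + 1)) q M) *
        ∑ j ∈ Finset.range (M + 1),
          (-1) ^ j * qbinom q M j * q ^ (j * (j + 1) / 2 + N * j) *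
            qpoch (q ^ (x + 1 + j)) q (M - j) * qpoch (q ^ (x - N)) q j * f (x + j) := by
  rw [main_aux hq0 hq1 N f M x]
  simp only [qcoef]
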